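/- arXiv:1812.01688 — 5 statements merged into one kernel-verified Lean document; each statement's English description precedes it below -/
import Mathlib

section
/- With constant circuit power μ ≥ 0, the energy efficiency EE(P,B) = B·log₂(1 + Pβ/(B N₀))/(P + μ) satisfies sup_{P>0, B>0} EE(P,B) = log₂(e)·β/N₀, the same supremum as when μ = 0, and the supremum is not attained when μ > 0. -/
open Real Filter

/-- With constant circuit power μ ≥ 0, the EE(P,B) = B·log₂(1+Pβ/(BN₀))/(P+μ)
has supremum log₂(e)·β/N₀ over P, B > 0 (the same as for μ = 0), and the
supremum is not attained when μ > 0. -/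
theorem ee_circuit_power_supremum (β N₀ μ : ℝ) (hβ : 0 < β) (hN : 0 < N₀)
    (hμ : 0 ≤ μ) :
    (∀ P B : ℝ, 0 < P → 0 < B →
      B * (Real.log (1 + P * β / (B * N₀)) / Real.log 2) / (P + μ) ≤
        (Real.log (Real.exp 1) / Real.log 2) * β / N₀) ∧
    (∀ ε : ℝ, 0 < ε → ∃ P B : ℝ, 0 < P ∧ 0 < B ∧
      (Real.log (Real.exp 1) / Real.log 2) * β / N₀ - ε <
        B * (Real.log (1 + P * β / (B * N₀)) / Real.log 2) / (P + μ)) ∧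
    (0 < μ → ∀ P B : ℝ, 0 < P → 0 < B →
      B * (Real.log (1 + P * β / (B * N₀)) / Real.log 2) / (P + μ) <
        (Real.log (Real.exp 1) / Real.log 2) * β / N₀) := by
  have hlog2 : 0 < Real.log 2 := Real.log_pos one_lt_two
  have hC : (Real.log (Real.exp 1) / Real.log 2) * β / N₀ = β / (N₀ * Real.log 2) := by
    rw [Real.log_exp]; rw [div_mul_eq_mul_div, one_mul, div_div, mul_comm]
  refine ⟨?_, ?_, ?_⟩
  · intro P B hP hB
    rw [hC]
    have hx : 0 ≤ P * β / (B * N₀) := by positivity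
    have hlog : Real.log (1 + P * β / (B * N₀)) ≤ P * β / (B * N₀) := by
      have := Real.log_le_sub_one_of_pos (x := 1 + P * β / (B * N₀)) (by linarith)
      linarith
    calc B * (Real.log (1 + P * β / (B * N₀)) / Real.log 2) / (P + μ)
        ≤ B * ((P * β / (B * N₀)) / Real.log 2) / (P + μ) := by
          gcongr
      _ = P * β / (N₀ * Real.log 2 * (P + μ)) := by
          field_simp
      _ ≤ β / (N₀ * Real.log 2) := by
          rw [div_le_div_iff₀ (by positivity) (by positivity)]
          nlinarith [mul_pos hN hlog2, mul_nonneg (mul_pos hN hlog2).le hμ]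
  · intro ε hε
    rw [hC]
    set C := β / (N₀ * Real.log 2) with hCdef
    have hCpos : 0 < C := by positivity
    have h0 : Tendsto (fun t : ℝ => β / (t * N₀)) atTop (nhds 0) :=
      Tendsto.div_atTop tendsto_const_nhds (Tendsto.atTop_mul_const hN tendsto_id)
    have h1 : Tendsto (fun t : ℝ => 1 + β / (t * N₀)) atTop (nhds 1) := by
      simpa using tendsto_const_nhds.add h0
    have h2 : Tendsto (fun t : ℝ => 1 + μ / t) atTop (nhds 1) := by
      have : Tendsto (fun t : ℝ => μ / t) atTop (nhds 0) :=
        Tendsto.div_atTop tendsto_const_nhds tendsto_id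
      simpa using tendsto_const_nhds.add this
    have hf : Tendsto (fun t : ℝ => C / ((1 + β / (t * N₀)) * (1 + μ / t)))
        atTop (nhds C) := by
      have hmul := h1.mul h2
      simp only [mul_one] at hmul
      have := (tendsto_const_nhds (x := C)).div hmul one_ne_zero; rw [div_one] at this; exact this
    have hev : ∀ᶠ t : ℝ in atTop,
        C - ε < C / ((1 + β / (t * N₀)) * (1 + μ / t)) :=
      hf.eventually (eventually_gt_nhds (by linarith))
    obtain ⟨t, ht1, ht0⟩ := (hev.and (eventually_gt_atTop 0)).exists
    refine ⟨t, t ^ 2, ht0, by positivity, ?_⟩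
    have hxeq : t * β / (t ^ 2 * N₀) = β / (t * N₀) := by
      field_simp
    rw [hxeq]
    set x := β / (t * N₀) with hxdef
    have hxpos : 0 < x := by positivity
    have hlogge : x / (1 + x) ≤ Real.log (1 + x) := by
      have h := Real.log_le_sub_one_of_pos (x := (1 + x)⁻¹) (by positivity)
      rw [Real.log_inv] at h
      have heq : (1 : ℝ) - (1 + x)⁻¹ = x / (1 + x) := by
        field_simp; ring
      linarith [heq ▸ (by linarith : (1:ℝ) - (1 + x)⁻¹ ≤ Real.log (1 + x))]
    calc C - ε < C / ((1 + x) * (1 + μ / t)) := ht1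
      _ = t ^ 2 * ((x / (1 + x)) / Real.log 2) / (t + μ) := by
          rw [hCdef, hxdef]
          have h1 : (1 : ℝ) + β / (t * N₀) ≠ 0 := by positivity
          have h2 : t + μ ≠ 0 := by positivity
          field_simp
      _ ≤ t ^ 2 * (Real.log (1 + x) / Real.log 2) / (t + μ) := by
          gcongr
  · intro hμ' P B hP hB
    rw [hC]
    have hx : 0 ≤ P * β / (B * N₀) := by positivity
    have hlog : Real.log (1 + P * β / (B * N₀)) ≤ P * β / (B * N₀) := by
      have := Real.log_le_sub_one_of_pos (x := 1 + P * β / (B * N₀)) (by linarith)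
      linarith
    calc B * (Real.log (1 + P * β / (B * N₀)) / Real.log 2) / (P + μ)
        ≤ B * ((P * β / (B * N₀)) / Real.log 2) / (P + μ) := by
          gcongr
      _ = P * β / (N₀ * Real.log 2 * (P + μ)) := by
          field_simp
      _ < β / (N₀ * Real.log 2) := by
          rw [div_lt_div_iff₀ (by positivity) (by positivity)]
          nlinarith [mul_pos hN hlog2, mul_pos (mul_pos hN hlog2) hμ']
end

section
/- Let g(z) = log₂(1 + cz)/(z + ν + η·log₂(1 + cz)) for z > 0, where c = β/N₀ > 0, ν > 0, η ≥ 0. Then g is maximized at z* = (e^x − 1)/c, where x = W(cν/e − 1/e) + 1 and W is the principal branch of the Lambert W function; moreover z* does not depend on η. -/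
open Real

/-- Theorem 1: g(z) = log₂(1+cz)/(z + ν + η·log₂(1+cz)) is maximized at
z* = (e^x − 1)/c, where x = W(cν/e − 1/e) + 1 and W is the principal Lambert W
function (the unique w ≥ −1 with w·e^w = y). Note z* does not depend on η. -/
theorem ee_maximizer_lambert (c ν η : ℝ) (hc : 0 < c) (hν : 0 < ν) (hη : 0 ≤ η)
    (w : ℝ) (hw₁ : -1 ≤ w)
    (hw₂ : w * Real.exp w = c * ν / Real.exp 1 - 1 / Real.exp 1) :
    ∀ z : ℝ, 0 < z →
      (Real.log (1 + c * z) / Real.log 2) /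
          (z + ν + η * (Real.log (1 + c * z) / Real.log 2)) ≤
      (Real.log (1 + c * ((Real.exp (w + 1) - 1) / c)) / Real.log 2) /
          ((Real.exp (w + 1) - 1) / c + ν +
            η * (Real.log (1 + c * ((Real.exp (w + 1) - 1) / c)) / Real.log 2)) := by
  intro z hz
  have he : (0:ℝ) < Real.exp 1 := Real.exp_pos 1
  have ha0 : 0 < Real.exp (w + 1) := Real.exp_pos _
  have hw1 : 0 ≤ w + 1 := by linarith
  have ha1 : (1:ℝ) ≤ Real.exp (w + 1) := by
    calc (1:ℝ) = Real.exp 0 := (Real.exp_zero).symm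
    _ ≤ Real.exp (w + 1) := Real.exp_le_exp.2 hw1
  -- key identity from Lambert equation: w * exp(w+1) = c*ν - 1
  have hwa : w * Real.exp (w + 1) = c * ν - 1 := by
    have h1 : Real.exp (w + 1) = Real.exp w * Real.exp 1 := by rw [Real.exp_add]
    have h2 : w * Real.exp w * Real.exp 1 = c * ν - 1 := by
      rw [hw₂]; field_simp
    rw [h1]; nlinarith [h2]
  have hzs : 1 + c * ((Real.exp (w + 1) - 1) / c) = Real.exp (w + 1) := by
    field_simp
    ring
  rw [hzs, Real.log_exp]
  have hl2 : 0 < Real.log 2 := Real.log_pos (by norm_num)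
  have hu : (1:ℝ) < 1 + c * z := by nlinarith
  have hL : 0 < Real.log (1 + c * z) := Real.log_pos hu
  have hzs0 : 0 ≤ (Real.exp (w + 1) - 1) / c := div_nonneg (by linarith) hc.le
  -- tangent line inequality
  have htan : Real.log (1 + c * z) ≤ (1 + c * z) / Real.exp (w + 1) + w := by
    have h1 : Real.log ((1 + c * z) / Real.exp (w + 1)) ≤
        (1 + c * z) / Real.exp (w + 1) - 1 :=
      Real.log_le_sub_one_of_pos (by positivity)
    have h2 : Real.log ((1 + c * z) / Real.exp (w + 1)) =
        Real.log (1 + c * z) - (w + 1) := by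
      rw [Real.log_div (by linarith) (ne_of_gt ha0), Real.log_exp]
    rw [h2] at h1; linarith
  -- c*(z*+ν) = (w+1)*exp(w+1)
  have hA : (Real.exp (w + 1) - 1) / c + ν = (w + 1) * Real.exp (w + 1) / c := by
    field_simp
    linarith [hwa]
  have hmain : Real.log (1 + c * z) * ((Real.exp (w + 1) - 1) / c + ν) ≤
      (w + 1) * (z + ν) := by
    rw [hA]
    have hpos : 0 ≤ (w + 1) * Real.exp (w + 1) / c := by positivity
    have h3 := mul_le_mul_of_nonneg_right htan hpos
    have heq : ((1 + c * z) / Real.exp (w + 1) + w) *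
        ((w + 1) * Real.exp (w + 1) / c) = (w + 1) * (z + ν) := by
      field_simp
      linear_combination (w + 1) * hwa
    linarith [heq ▸ h3]
  have h3 : Real.log (1 + c * z) / Real.log 2 * ((Real.exp (w + 1) - 1) / c + ν) ≤
      (w + 1) / Real.log 2 * (z + ν) := by
    rw [div_mul_eq_mul_div, div_mul_eq_mul_div]
    exact div_le_div_of_nonneg_right hmain hl2.le
  have hd1 : 0 < z + ν + η * (Real.log (1 + c * z) / Real.log 2) := by positivity
  have hd2 : 0 < (Real.exp (w + 1) - 1) / c + ν + η * ((w + 1) / Real.log 2) := by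
    have : 0 ≤ η * ((w + 1) / Real.log 2) := by positivity
    linarith
  rw [div_le_div_iff₀ hd1 hd2]
  nlinarith [h3]
end

section
/- With x = W(βν/(N₀ e) − 1/e) + 1 and optimal ratio P/B = N₀(e^x − 1)/β, the maximum energy efficiency equals x·log₂(e) / (N₀(e^x − 1)/β + ν + η·x·log₂(e)), and the corresponding data rate is C = B·x·log₂(e), which can be made equal to any target value by choosing B appropriately. -/
open Real

/-- With x = W(βν/(N₀e) − 1/e) + 1 and the optimal ratio P/B = N₀(e^x − 1)/β,
the maximum EE equals x·log₂(e)/(N₀(e^x−1)/β + ν + η·x·log₂(e)), the data rate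
equals C = B·x·log₂(e), and any target rate R > 0 is achievable by choosing B. -/
theorem ee_max_value_and_rate (β N₀ ν η : ℝ) (hβ : 0 < β) (hN : 0 < N₀)
    (hν : 0 < ν) (hη : 0 ≤ η) (w : ℝ) (hw₁ : -1 ≤ w)
    (hw₂ : w * Real.exp w = β * ν / (N₀ * Real.exp 1) - 1 / Real.exp 1) :
    (∀ B : ℝ, 0 < B →
      (B * (Real.log (1 + (B * (N₀ * (Real.exp (w + 1) - 1) / β)) * β / (B * N₀)) / Real.log 2)) /
          ((B * (N₀ * (Real.exp (w + 1) - 1) / β)) + ν * B +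
            η * B * (Real.log (1 + (B * (N₀ * (Real.exp (w + 1) - 1) / β)) * β / (B * N₀)) / Real.log 2)) =
        ((w + 1) * (Real.log (Real.exp 1) / Real.log 2)) /
          (N₀ * (Real.exp (w + 1) - 1) / β + ν +
            η * (w + 1) * (Real.log (Real.exp 1) / Real.log 2)) ∧
      B * (Real.log (1 + (B * (N₀ * (Real.exp (w + 1) - 1) / β)) * β / (B * N₀)) / Real.log 2) =
        B * (w + 1) * (Real.log (Real.exp 1) / Real.log 2)) ∧
    (∀ R : ℝ, 0 < R → ∃ B : ℝ, 0 < B ∧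
      B * (w + 1) * (Real.log (Real.exp 1) / Real.log 2) = R) := by
  have hlog2 : 0 < Real.log 2 := Real.log_pos (by norm_num)
  -- w > -1
  have hwgt : -1 < w := by
    rcases lt_or_eq_of_le hw₁ with h | h
    · exact h
    · exfalso
      rw [← h] at hw₂
      have : β * ν / (N₀ * Real.exp 1) = 0 := by
        have he : Real.exp (-1 : ℝ) = 1 / Real.exp 1 := by
          rw [Real.exp_neg]; ring
        rw [he] at hw₂; linarith
      have : 0 < β * ν / (N₀ * Real.exp 1) :=
        div_pos (mul_pos hβ hν) (mul_pos hN (Real.exp_pos 1))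
      linarith
  have hx : 0 < w + 1 := by linarith
  constructor
  · intro B hB
    have hB' : B ≠ 0 := ne_of_gt hB
    have hN' : N₀ ≠ 0 := ne_of_gt hN
    have hβ' : β ≠ 0 := ne_of_gt hβ
    have harg : (B * (N₀ * (Real.exp (w + 1) - 1) / β)) * β / (B * N₀) = Real.exp (w + 1) - 1 := by
      field_simp
    have hlog : Real.log (1 + (B * (N₀ * (Real.exp (w + 1) - 1) / β)) * β / (B * N₀)) = w + 1 := by
      rw [harg]
      have : 1 + (Real.exp (w + 1) - 1) = Real.exp (w + 1) := by ring
      rw [this, Real.log_exp]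
    rw [hlog, Real.log_exp]
    constructor
    · have hden' : B * (N₀ * (Real.exp (w + 1) - 1) / β) + ν * B +
          η * B * ((w + 1) / Real.log 2) =
          B * (N₀ * (Real.exp (w + 1) - 1) / β + ν + η * (w + 1) * (1 / Real.log 2)) := by
        ring
      have hnum' : B * ((w + 1) / Real.log 2) = B * ((w + 1) * (1 / Real.log 2)) := by ring
      rw [hden', hnum', mul_div_mul_left _ _ hB']
    · ring
  · intro R hR
    refine ⟨R * Real.log 2 / (w + 1), div_pos (mul_pos hR hlog2) hx, ?_⟩
    rw [Real.log_exp]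
    field_simp
end

section
/- For the MIMO energy-efficiency expression EE = M B·log₂(1 + P σ²/(M B N₀)) / (P + νBM + ηBM·log₂(1 + P σ²/(M B N₀))), where σ² = σ_max²(H), EE depends on (P, B) only through z = P/(MB), and is maximized at P/(MB) = N₀(e^x̃ − 1)/σ² with x̃ = W(σ²ν/(N₀ e) − 1/e) + 1. -/
open Real

/-- The EE expression depends only on z = P/(M·B). -/
lemma ee_reduce (M σ2 N₀ ν η P B : ℝ) (hM : 0 < M) (hN : 0 < N₀)
    (hP : 0 < P) (hB : 0 < B) :
    (M * B * (Real.log (1 + P * σ2 / (M * B * N₀)) / Real.log 2)) /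
        (P + ν * B * M + η * B * M * (Real.log (1 + P * σ2 / (M * B * N₀)) / Real.log 2)) =
    (Real.log (1 + (P / (M * B)) * σ2 / N₀) / Real.log 2) /
        (P / (M * B) + ν + η * (Real.log (1 + (P / (M * B)) * σ2 / N₀) / Real.log 2)) := by
  have hMB : (0:ℝ) < M * B := mul_pos hM hB
  have harg : 1 + P * σ2 / (M * B * N₀) = 1 + (P / (M * B)) * σ2 / N₀ := by
    rw [div_mul_eq_mul_div, div_div]
  rw [harg]
  set L := Real.log (1 + (P / (M * B)) * σ2 / N₀) / Real.log 2 with hL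
  have hden : P + ν * B * M + η * B * M * L = (M * B) * (P / (M * B) + ν + η * L) := by
    field_simp
  rw [hden, mul_div_mul_left _ _ (ne_of_gt hMB)]

/-- Core inequality: for all real x, x·(z*+ν) ≤ (w+1)·(N₀(eˣ−1)/σ2+ν). -/
lemma core_ineq (σ2 N₀ ν : ℝ) (hσ : 0 < σ2) (hN : 0 < N₀)
    (w : ℝ) (hw : 0 < w + 1) (hσν : σ2 * ν = N₀ * (w * Real.exp (w + 1) + 1)) (x : ℝ) :
    x * (N₀ * (Real.exp (w + 1) - 1) / σ2 + ν) ≤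
      (w + 1) * (N₀ * (Real.exp x - 1) / σ2 + ν) := by
  have hconv : Real.exp (w + 1) * (x - (w + 1) + 1) ≤ Real.exp x := by
    have h := Real.add_one_le_exp (x - (w + 1))
    have h2 := mul_le_mul_of_nonneg_left h (Real.exp_pos (w + 1)).le
    rw [← Real.exp_add, show (w + 1) + (x - (w + 1)) = x by ring] at h2
    exact h2
  have t : 0 ≤ N₀ * (w + 1) * (Real.exp x - Real.exp (w + 1) * (x - (w + 1) + 1)) :=
    mul_nonneg (mul_pos hN hw).le (sub_nonneg.2 hconv)
  have hz0 : ν * σ2 - N₀ * (w * Real.exp (w + 1) + 1) = 0 := by linarith [hσν]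
  have expand : (w + 1) * (N₀ * (Real.exp x - 1) + ν * σ2)
      - x * (N₀ * (Real.exp (w + 1) - 1) + ν * σ2)
      = N₀ * (w + 1) * (Real.exp x - Real.exp (w + 1) * (x - (w + 1) + 1))
        + (ν * σ2 - N₀ * (w * Real.exp (w + 1) + 1)) * ((w + 1) - x) := by ring
  rw [hz0, zero_mul, add_zero] at expand
  have hmul : x * (N₀ * (Real.exp (w + 1) - 1) + ν * σ2) ≤
      (w + 1) * (N₀ * (Real.exp x - 1) + ν * σ2) := by linarith [t, expand]
  have e1 : x * (N₀ * (Real.exp (w + 1) - 1) / σ2 + ν)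
      = x * (N₀ * (Real.exp (w + 1) - 1) + ν * σ2) / σ2 := by
    field_simp
  have e2 : (w + 1) * (N₀ * (Real.exp x - 1) / σ2 + ν)
      = (w + 1) * (N₀ * (Real.exp x - 1) + ν * σ2) / σ2 := by
    field_simp
  rw [e1, e2]
  gcongr

/-- MIMO EE = M·B·log₂(1 + Pσ²/(MBN₀))/(P + νBM + ηBM·log₂(1 + Pσ²/(MBN₀)))
depends on (P,B) only through z = P/(MB), and is maximized at
P/(MB) = N₀(e^x̃ − 1)/σ² with x̃ = W(σ²ν/(N₀e) − 1/e) + 1. -/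
theorem mimo_ee_maximizer (M : ℕ) (hM : 0 < M) (σ2 N₀ ν η : ℝ) (hσ : 0 < σ2)
    (hN : 0 < N₀) (hν : 0 < ν) (hη : 0 ≤ η) (w : ℝ) (hw₁ : -1 ≤ w)
    (hw₂ : w * Real.exp w = σ2 * ν / (N₀ * Real.exp 1) - 1 / Real.exp 1) :
    (∀ P B P' B' : ℝ, 0 < P → 0 < B → 0 < P' → 0 < B' →
      P / (M * B) = P' / (M * B') →
      (M * B * (Real.log (1 + P * σ2 / (M * B * N₀)) / Real.log 2)) /
          (P + ν * B * M + η * B * M * (Real.log (1 + P * σ2 / (M * B * N₀)) / Real.log 2)) =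
      (M * B' * (Real.log (1 + P' * σ2 / (M * B' * N₀)) / Real.log 2)) /
          (P' + ν * B' * M + η * B' * M * (Real.log (1 + P' * σ2 / (M * B' * N₀)) / Real.log 2))) ∧
    (∀ P B : ℝ, 0 < P → 0 < B →
      P / (M * B) = N₀ * (Real.exp (w + 1) - 1) / σ2 →
      ∀ P' B' : ℝ, 0 < P' → 0 < B' →
        (M * B' * (Real.log (1 + P' * σ2 / (M * B' * N₀)) / Real.log 2)) /
            (P' + ν * B' * M + η * B' * M * (Real.log (1 + P' * σ2 / (M * B' * N₀)) / Real.log 2)) ≤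
        (M * B * (Real.log (1 + P * σ2 / (M * B * N₀)) / Real.log 2)) /
            (P + ν * B * M + η * B * M * (Real.log (1 + P * σ2 / (M * B * N₀)) / Real.log 2))) := by
  have hMr : (0:ℝ) < (M:ℝ) := by exact_mod_cast hM
  have hE1 : (0:ℝ) < Real.exp 1 := Real.exp_pos 1
  constructor
  · intro P B P' B' hP hB hP' hB' hz
    rw [ee_reduce (M:ℝ) σ2 N₀ ν η P B hMr hN hP hB,
        ee_reduce (M:ℝ) σ2 N₀ ν η P' B' hMr hN hP' hB', hz]
  · intro P B hP hB hPB P' B' hP' hB'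
    -- w ≠ -1, so w + 1 > 0
    have hwne : w ≠ -1 := by
      intro h
      subst h
      rw [Real.exp_neg] at hw₂
      have hzero : σ2 * ν / (N₀ * Real.exp 1) = 0 := by
        rw [one_div] at hw₂; linarith
      have hpos : 0 < σ2 * ν / (N₀ * Real.exp 1) := by positivity
      linarith
    have hw0 : 0 < w + 1 :=
      lt_of_le_of_ne (by linarith) (fun h => hwne (by linarith))
    -- σ2 ν = N₀ (w e^{w+1} + 1)
    have hNe : N₀ * Real.exp 1 ≠ 0 := by positivity
    have key : w * Real.exp w * (N₀ * Real.exp 1) = σ2 * ν - N₀ := by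
      have hNe' : N₀ ≠ 0 := hN.ne'
      field_simp at hw₂
      have h2 : (w * Real.exp w * (N₀ * Real.exp 1)) * Real.exp 1
          = (σ2 * ν - N₀) * Real.exp 1 := by linear_combination Real.exp 1 * hw₂
      exact mul_right_cancel₀ (Real.exp_ne_zero 1) h2
    have hσν : σ2 * ν = N₀ * (w * Real.exp (w + 1) + 1) := by
      rw [Real.exp_add]
      linear_combination -key
    -- rewrite both sides in reduced form
    rw [ee_reduce (M:ℝ) σ2 N₀ ν η P B hMr hN hP hB,
        ee_reduce (M:ℝ) σ2 N₀ ν η P' B' hMr hN hP' hB']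
    have hz : 0 < P / ((M:ℝ) * B) := by positivity
    have hz' : 0 < P' / ((M:ℝ) * B') := by positivity
    have hlog2 : 0 < Real.log 2 := Real.log_pos (by norm_num)
    set x := Real.log (1 + P' / ((M:ℝ) * B') * σ2 / N₀) with hxdef
    have hargpos : 0 < 1 + P' / ((M:ℝ) * B') * σ2 / N₀ := by positivity
    have hx0 : 0 ≤ x := Real.log_nonneg (by
      have : 0 ≤ P' / ((M:ℝ) * B') * σ2 / N₀ := by positivity
      linarith)
    have hXt : Real.log (1 + P / ((M:ℝ) * B) * σ2 / N₀) = w + 1 := by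
      rw [hPB, show 1 + N₀ * (Real.exp (w + 1) - 1) / σ2 * σ2 / N₀ = Real.exp (w + 1) by
        (field_simp; ring), Real.log_exp]
    have hz'eq : P' / ((M:ℝ) * B') = N₀ * (Real.exp x - 1) / σ2 := by
      rw [Real.exp_log hargpos]
      field_simp
      ring
    have main := core_ineq σ2 N₀ ν hσ hN w hw0 hσν x
    rw [← hPB, ← hz'eq] at main
    -- main : x * (P/(M B) + ν) ≤ (w+1) * (P'/(M B') + ν)
    rw [hXt]
    have hd : 0 < P / ((M:ℝ) * B) + ν + η * ((w + 1) / Real.log 2) := by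
      have h1 : 0 ≤ η * ((w + 1) / Real.log 2) :=
        mul_nonneg hη (div_nonneg hw0.le hlog2.le)
      linarith
    have hd' : 0 < P' / ((M:ℝ) * B') + ν + η * (x / Real.log 2) := by
      have h1 : 0 ≤ η * (x / Real.log 2) := mul_nonneg hη (div_nonneg hx0 hlog2.le)
      linarith
    rw [div_div, div_div, div_le_div_iff₀ (by positivity) (by positivity)]
    have e1 : Real.log 2 * (P / ((M:ℝ) * B) + ν + η * ((w + 1) / Real.log 2))
        = Real.log 2 * (P / ((M:ℝ) * B) + ν) + η * (w + 1) := by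
      field_simp
    have e2 : Real.log 2 * (P' / ((M:ℝ) * B') + ν + η * (x / Real.log 2))
        = Real.log 2 * (P' / ((M:ℝ) * B') + ν) + η * x := by
      field_simp
    rw [e1, e2]
    nlinarith [mul_le_mul_of_nonneg_left main hlog2.le]
end

section
/- For any x > 0, the function φ(x) = x/(a(e^x − 1) + ν + ηx·log₂(e)·(1/log₂(e))) written as f(x) = x·log₂(e)/(a(e^x−1) + ν + η x log₂(e)) with a = N₀/β > 0 has a unique maximizer on (0,∞), given by x = W(ν/(a e) − 1/e) + 1, provided ν/(a e) − 1/e > −1/e (i.e., ν > 0). -/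
open Real

/-- Reparametrized EE: f(x) = x·log₂(e)/(a(e^x − 1) + ν + ηx·log₂(e)) with
a > 0, ν > 0, η ≥ 0 has a unique maximizer on (0,∞), namely
x₀ = W(ν/(ae) − 1/e) + 1 (W being the principal Lambert W branch, i.e. the
unique w ≥ −1 with w·e^w = ν/(ae) − 1/e). -/
theorem ee_reparametrized_unique_maximizer (a ν η : ℝ) (ha : 0 < a)
    (hν : 0 < ν) (hη : 0 ≤ η) (w : ℝ) (hw₁ : -1 ≤ w)
    (hw₂ : w * Real.exp w = ν / (a * Real.exp 1) - 1 / Real.exp 1) :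
    0 < w + 1 ∧
    (∀ x : ℝ, 0 < x →
      x * (Real.log (Real.exp 1) / Real.log 2) /
          (a * (Real.exp x - 1) + ν + η * x * (Real.log (Real.exp 1) / Real.log 2)) ≤
        (w + 1) * (Real.log (Real.exp 1) / Real.log 2) /
          (a * (Real.exp (w + 1) - 1) + ν + η * (w + 1) * (Real.log (Real.exp 1) / Real.log 2))) ∧
    (∀ x : ℝ, 0 < x →
      x * (Real.log (Real.exp 1) / Real.log 2) /
          (a * (Real.exp x - 1) + ν + η * x * (Real.log (Real.exp 1) / Real.log 2)) =
        (w + 1) * (Real.log (Real.exp 1) / Real.log 2) /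
          (a * (Real.exp (w + 1) - 1) + ν + η * (w + 1) * (Real.log (Real.exp 1) / Real.log 2)) →
      x = w + 1) := by
  have he : (0:ℝ) < Real.exp 1 := Real.exp_pos 1
  have hae : a * Real.exp 1 ≠ 0 := by positivity
  -- ν as explicit expression
  have h3 : ν = (w * Real.exp w + 1 / Real.exp 1) * (a * Real.exp 1) := by
    have : ν / (a * Real.exp 1) = w * Real.exp w + 1 / Real.exp 1 := by linarith
    rw [← this, div_mul_cancel₀ _ hae]
  have hexpadd : Real.exp (w + 1) = Real.exp w * Real.exp 1 := Real.exp_add w 1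
  have hkey : a * w * Real.exp (w + 1) = ν - a := by
    rw [hexpadd, h3]
    field_simp
    ring
  -- w + 1 > 0
  have hw : -1 < w := by
    rcases hw₁.lt_or_eq with h | h
    · exact h
    · exfalso
      rw [← h] at hkey
      simp at hkey
      linarith
  have hw1 : 0 < w + 1 := by linarith
  have he0 : 0 < Real.exp (w + 1) := Real.exp_pos _
  -- key inequality
  have E : ∀ x : ℝ, a * Real.exp (w + 1) * x ≤ a * (Real.exp x - 1) + ν := by
    intro x
    have h := Real.add_one_le_exp (x - (w + 1))
    have h2 : Real.exp (w + 1) * Real.exp (x - (w + 1)) = Real.exp x := by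
      rw [← Real.exp_add]; ring_nf
    nlinarith [mul_le_mul_of_nonneg_left h (mul_pos ha he0).le]
  have Estrict : ∀ x : ℝ, x ≠ w + 1 → a * Real.exp (w + 1) * x < a * (Real.exp x - 1) + ν := by
    intro x hx
    have hne : x - (w + 1) ≠ 0 := sub_ne_zero.mpr hx
    have h := Real.add_one_lt_exp hne
    have h2 : Real.exp (w + 1) * Real.exp (x - (w + 1)) = Real.exp x := by
      rw [← Real.exp_add]; ring_nf
    nlinarith [mul_lt_mul_of_pos_left h (mul_pos ha he0)]
  have hval : a * (Real.exp (w + 1) - 1) + ν = (w + 1) * (a * Real.exp (w + 1)) := by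
    linear_combination - hkey
  simp only [Real.log_exp]
  set c : ℝ := 1 / Real.log 2 with hc
  have hcpos : 0 < c := by
    rw [hc]
    exact div_pos one_pos (Real.log_pos (by norm_num))
  have hD : ∀ x : ℝ, 0 < x → 0 < a * (Real.exp x - 1) + ν + η * x * c := by
    intro x hx
    have h1 : 1 < Real.exp x := by nlinarith [Real.add_one_le_exp x]
    have h2 : 0 ≤ η * x * c := by positivity
    nlinarith
  have hD0 : 0 < a * (Real.exp (w + 1) - 1) + ν + η * (w + 1) * c := hD _ hw1
  refine ⟨hw1, ?_, ?_⟩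
  · intro x hx
    rw [div_le_div_iff₀ (hD x hx) hD0, hval]
    nlinarith [mul_le_mul_of_nonneg_left (E x) (mul_pos hw1 hcpos).le]
  · intro x hx heq
    by_contra hne
    rw [div_eq_div_iff (hD x hx).ne' hD0.ne', hval] at heq
    nlinarith [mul_lt_mul_of_pos_left (Estrict x hne) (mul_pos hw1 hcpos)]
end
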